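/- arXiv:1506.00405 — 4 statements merged into one kernel-verified Lean document; each statement's English description precedes it below -/
import Mathlib

section
/- Let n ≥ 1, ε > 0 and let h : ℂⁿ → ℂ be analytic on the open ball B_n(ε) and not identically zero on B_n(ε). Then the set { x ∈ ℝⁿ : ‖x‖ < ε and h(x) ≠ 0 } is open and dense in the real ball { x ∈ ℝⁿ : ‖x‖ < ε }. -/
/-!
If `h ∘ ofReal` vanished on a real open set around `x`, then for every `w` near `x` the function
`t ↦ h (x + Re (w - x) + t • Im (w - x))` of one complex variable vanishes on real `t`, hence
identically, in particular at `t = I`, where it equals `h w`. So `h` would vanish on a complex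
neighbourhood of `x`, and by the identity theorem on the connected ball, everywhere on it.
Openness is continuity.
-/

open Metric Filter Topology Set

theorem AnalyticOnNhd.eqOn_zero_of_forall_ofReal {φ : ℂ → ℂ} {R : ℝ} (hR : 0 < R)
    (hφ : AnalyticOnNhd ℂ φ (ball 0 R)) (h0 : ∀ t : ℝ, |t| < R → φ t = 0) :
    EqOn φ 0 (ball 0 R) := by
  have hreal : ∀ᶠ t : ℝ in 𝓝[≠] 0, φ t = 0 :=
    nhdsWithin_le_nhds <| mem_of_superset (ball_mem_nhds 0 hR) fun t ht => h0 t (by simpa using ht)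
  have hofReal : Tendsto ((↑) : ℝ → ℂ) (𝓝[≠] 0) (𝓝[≠] 0) :=
    Complex.continuous_ofReal.continuousWithinAt.tendsto_nhdsWithin fun _ _ ↦ by simp_all
  exact hφ.eqOn_zero_of_preconnected_of_frequently_eq_zero (convex_ball 0 R).isPreconnected
    (mem_ball_self hR) (hofReal.frequently hreal.frequently)

section

variable {ι : Type*} [Fintype ι]

theorem norm_ofReal_pi (x : ι → ℝ) : ‖fun i => (x i : ℂ)‖ = ‖x‖ := by
  simp [Pi.norm_def, Complex.nnnorm_real]

theorem dist_ofReal_pi (x y : ι → ℝ) :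
    dist (fun i => (x i : ℂ)) (fun i => (y i : ℂ)) = dist x y := by
  rw [dist_eq_norm, dist_eq_norm, ← norm_ofReal_pi]
  congr 1
  funext i
  simp

theorem AnalyticAt.eventually_eq_zero_of_eventually_eq_zero_ofReal {h : (ι → ℂ) → ℂ}
    {x : ι → ℝ} (hh : AnalyticAt ℂ h (fun i => (x i : ℂ)))
    (h0 : ∀ᶠ y in 𝓝 x, h (fun i => (y i : ℂ)) = 0) :
    ∀ᶠ w in 𝓝 (fun i => (x i : ℂ)), h w = 0 := by
  obtain ⟨δ, hδ, hδ_an, hδ_zero⟩ : ∃ δ > 0, (∀ w, dist w (fun i => (x i : ℂ)) < δ →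
      AnalyticAt ℂ h w) ∧ ∀ y, dist y x < δ → h (fun i => (y i : ℂ)) = 0 := by
    obtain ⟨δ₁, hδ₁, h₁⟩ := Metric.eventually_nhds_iff.1 hh.eventually_analyticAt
    obtain ⟨δ₂, hδ₂, h₂⟩ := Metric.eventually_nhds_iff.1 h0
    exact ⟨min δ₁ δ₂, lt_min hδ₁ hδ₂, fun w hw => h₁ (hw.trans_le (min_le_left _ _)),
      fun y hy => h₂ (hy.trans_le (min_le_right _ _))⟩
  refine Metric.eventually_nhds_iff.2 ⟨δ / 3, by positivity, fun w hw => ?_⟩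
  set d := w - fun i => (x i : ℂ)
  let line : ℂ → ι → ℂ := fun t i => (x i : ℂ) + ((d i).re + t * (d i).im)
  have hline_I : line Complex.I = w := by
    funext i; apply Complex.ext <;> simp [line, d]
  have hline_real (t : ℝ) : line t = fun i => ((x i + ((d i).re + t * (d i).im) : ℝ) : ℂ) := by
    funext i; push_cast; rfl
  have hline_an (t : ℂ) : AnalyticAt ℂ line t :=
    AnalyticAt.pi fun i => by fun_prop
  have hline_dist (t : ℂ) (ht : ‖t‖ < 2) : dist (line t) (fun i => (x i : ℂ)) < δ := by
    rw [dist_eq_norm, pi_norm_lt_iff hδ]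
    intro i
    have hdi : ‖d i‖ < δ / 3 := (norm_le_pi_norm d i).trans_lt (by rwa [dist_eq_norm] at hw)
    calc ‖line t i - x i‖ = ‖((d i).re : ℂ) + t * (d i).im‖ := by simp [line]
      _ ≤ |(d i).re| + ‖t‖ * |(d i).im| := by
        simpa [Complex.norm_real] using norm_add_le ((d i).re : ℂ) (t * (d i).im)
      _ ≤ ‖d i‖ + 2 * ‖d i‖ := by
        gcongr
        · exact Complex.abs_re_le_norm _
        · exact Complex.abs_im_le_norm _
      _ < δ := by linarith
  have hφ : EqOn (fun t => h (line t)) 0 (ball 0 2) :=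
    AnalyticOnNhd.eqOn_zero_of_forall_ofReal two_pos
      (fun t ht => (hδ_an _ (hline_dist t (mem_ball_zero_iff.1 ht))).comp (hline_an t))
      (fun t ht => by
        rw [hline_real]
        apply hδ_zero
        rw [← dist_ofReal_pi, ← hline_real]
        exact hline_dist t (by simpa using ht))
  simpa [hline_I] using hφ (show Complex.I ∈ ball (0 : ℂ) 2 by simp)

end

theorem statement0_general (n : ℕ) (ε : ℝ)
    (h : (Fin n → ℂ) → ℂ)
    (hh : AnalyticOnNhd ℂ h (ball (0 : Fin n → ℂ) ε))
    (hnz : ∃ z ∈ ball (0 : Fin n → ℂ) ε, h z ≠ 0) :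
    IsOpen {x : Fin n → ℝ | ‖x‖ < ε ∧ h (fun i => (x i : ℂ)) ≠ 0} ∧
      {x : Fin n → ℝ | ‖x‖ < ε} ⊆
        closure {x : Fin n → ℝ | ‖x‖ < ε ∧ h (fun i => (x i : ℂ)) ≠ 0} := by
  have hball {x : Fin n → ℝ} (hx : ‖x‖ < ε) : (fun i => (x i : ℂ)) ∈ ball 0 ε := by
    rwa [mem_ball_zero_iff, norm_ofReal_pi]
  have hopen : IsOpen {x : Fin n → ℝ | ‖x‖ < ε} := isOpen_lt continuous_norm continuous_const
  have hcont : ContinuousOn (fun x : Fin n → ℝ => h fun i => (x i : ℂ)) {x | ‖x‖ < ε} :=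
    hh.continuousOn.comp (by fun_prop) fun _ => hball
  refine ⟨hcont.isOpen_inter_preimage hopen isOpen_compl_singleton, fun x hx => ?_⟩
  by_contra hx'
  obtain ⟨z, hz, hz0⟩ := hnz
  have hzero : ∀ᶠ y in 𝓝 x, h (fun i => (y i : ℂ)) = 0 := by
    filter_upwards [not_frequently.1 (mt mem_closure_iff_frequently.2 hx'), hopen.mem_nhds hx]
      with y hyS hy
    exact not_not.1 fun hy0 => hyS ⟨hy, hy0⟩
  exact hz0 <| hh.eqOn_zero_of_preconnected_of_eventuallyEq_zero (convex_ball 0 ε).isPreconnected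
    (hball hx) ((hh _ (hball hx)).eventually_eq_zero_of_eventually_eq_zero_ofReal hzero) hz

/-- Let `n ≥ 1`, `ε > 0` and let `h : ℂⁿ → ℂ` be analytic on the open ball
`B_n(ε)` and not identically zero there. Then `{x ∈ ℝⁿ : ‖x‖ < ε ∧ h x ≠ 0}` is open and dense
in the real ball `{x ∈ ℝⁿ : ‖x‖ < ε}`. -/
theorem statement0 (n : ℕ) (hn : 1 ≤ n) (ε : ℝ) (hε : 0 < ε)
    (h : (Fin n → ℂ) → ℂ)
    (hh : AnalyticOnNhd ℂ h (ball (0 : Fin n → ℂ) ε))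
    (hnz : ∃ z ∈ ball (0 : Fin n → ℂ) ε, h z ≠ 0) :
    IsOpen {x : Fin n → ℝ | ‖x‖ < ε ∧ h (fun i => (x i : ℂ)) ≠ 0} ∧
      {x : Fin n → ℝ | ‖x‖ < ε} ⊆
        closure {x : Fin n → ℝ | ‖x‖ < ε ∧ h (fun i => (x i : ℂ)) ≠ 0} :=
  statement0_general n ε h hh hnz
end

section
/- Let ε > 0 and let φ₁, …, φ_m be meromorphic functions on B_n(ε) that are algebraically independent over ℂ. Let f = α/β be a meromorphic function on D := {(a,b) ∈ ℂⁿ×ℂⁿ : a+b ∈ B_n(ε)} (α, β analytic on D, β not identically zero) such that for every k ∈ B_n(ε) the function u ↦ β(u,k) is not identically zero on {u ∈ ℂⁿ : u+k ∈ B_n(ε)}. Assume f(u,v) is algebraic over ℂ(φ₁(u),…,φ_m(u),φ₁(v),…,φ_m(v)), i.e. there is a nonzero polynomial P ∈ ℂ[X₁,…,X_{2m},Y] with P(φ₁(u),…,φ_m(u),φ₁(v),…,φ_m(v),f(u,v)) = 0 for all (u,v) with u, v, u+v ∈ B_n(ε) and all representing denominators nonzero. Then there exists N ∈ ℕ such that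 for every k ∈ B_n(ε) there are h ≤ N and polynomials R₀,…,R_{h−1}, S₀,…,S_{h−1} ∈ ℂ[X₁,…,X_m], each of degree at most N in each of the variables X₁,…,X_m, with no Sᵢ(φ₁,…,φ_m) identically zero, such that f(u,k)^h + ∑_{i=0}^{h−1} (Rᵢ(φ₁(u),…,φ_m(u))/Sᵢ(φ₁(u),…,φ_m(u))) · f(u,k)^i = 0 for all u in a neighbourhood of 0 at which all occurring denominators are nonzero. In particular f(u,k) is algebraic over ℂ(φ₁,…,φ_m) for every k ∈ B_n(ε). -/
/-!
Clearing all denominators turns `P(φ(u), φ(v), f(u, v)) = 0` into the vanishing of an analytic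
function of `(u, v)`: first where no denominator vanishes, then everywhere by the identity theorem.
Grouping the monomials of `P` by their exponents in `φ(u)` and `f`, this function is
`∑ₚ Kₚ(v) Mₚ(u, v)`, where the `Kₚ` are cleared polynomials in `φ(v)` alone and, by algebraic
independence, not all identically zero. A limit point `c` of the unit vectors `K(v) / ‖K(v)‖` as
`v → k` satisfies `∑ₚ cₚ Mₚ(u, k) = 0` for all `u`, i.e. `C(φ(u), f(u, k)) = 0` for a nonzero
polynomial `C` whose monomials are among those of `P`. Read as a polynomial in `f` over `ℂ[φ]`,
`C` has a leading coefficient that does not vanish at a generic `u`; hence `C` is not constant in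
`f`, and dividing by the leading coefficient gives the monic relation.
-/

open Metric MvPolynomial Filter Topology

section IdentityTheorem

variable {E : Type*} [NormedAddCommGroup E] [NormedSpace ℂ E] {U : Set E}

theorem AnalyticOnNhd.frequently_ne_zero {g : E → ℂ} (hg : AnalyticOnNhd ℂ g U)
    (hU : IsPreconnected U) (hg₀ : ∃ x ∈ U, g x ≠ 0) {x₀ : E} (hx₀ : x₀ ∈ U) :
    ∃ᶠ x in 𝓝 x₀, g x ≠ 0 := by
  obtain ⟨x, hxU, hx⟩ := hg₀
  exact fun hzero => hx (hg.eqOn_zero_of_preconnected_of_eventuallyEq_zero hU hx₀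
    (hzero.mono fun _ => not_not.mp) hxU)

theorem AnalyticOnNhd.exists_mem_ne_zero_of_mem_nhds {g : E → ℂ} (hg : AnalyticOnNhd ℂ g U)
    (hU : IsPreconnected U) (hg₀ : ∃ x ∈ U, g x ≠ 0) {x₀ : E} (hx₀ : x₀ ∈ U) {V : Set E}
    (hV : V ∈ 𝓝 x₀) : ∃ x ∈ V, g x ≠ 0 := by
  obtain ⟨x, hx, hxV⟩ := ((hg.frequently_ne_zero hU hg₀ hx₀).and_eventually hV).exists
  exact ⟨x, hxV, hx⟩

theorem exists_prod_ne_zero_of_analyticOnNhd {ι : Type*} (s : Finset ι) {F : ι → E → ℂ}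
    (hUo : IsOpen U) (hU : IsPreconnected U) (hUne : U.Nonempty)
    (hF : ∀ i ∈ s, AnalyticOnNhd ℂ (F i) U) (hF₀ : ∀ i ∈ s, ∃ x ∈ U, F i x ≠ 0) :
    ∃ x ∈ U, ∏ i ∈ s, F i x ≠ 0 := by
  classical
  induction s using Finset.induction_on with
  | empty => simpa [Set.Nonempty] using hUne
  | insert a s ha ih =>
    obtain ⟨x₁, hx₁U, hx₁⟩ := ih (fun i hi => hF i (s.mem_insert_of_mem hi))
      (fun i hi => hF₀ i (s.mem_insert_of_mem hi))
    have hprod : ∀ᶠ x in 𝓝 x₁, ∏ i ∈ s, F i x ≠ 0 :=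
      (Finset.analyticAt_fun_prod s fun i hi => hF i (s.mem_insert_of_mem hi) x₁ hx₁U)
        |>.continuousAt.eventually_ne hx₁
    obtain ⟨x, hFa, hx, hxU⟩ := (((hF a (s.mem_insert_self a)).frequently_ne_zero hU
      (hF₀ a (s.mem_insert_self a)) hx₁U).and_eventually
      (hprod.and (hUo.mem_nhds hx₁U))).exists
    exact ⟨x, hxU, by rw [Finset.prod_insert ha]; exact mul_ne_zero hFa hx⟩

theorem AnalyticOnNhd.eqOn_zero_of_forall_ne_zero {ι : Type*} [Fintype ι] {F : ι → E → ℂ}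
    {g : E → ℂ} (hg : AnalyticOnNhd ℂ g U) (hUo : IsOpen U) (hU : IsPreconnected U)
    (hF : ∀ i, AnalyticOnNhd ℂ (F i) U) (hF₀ : ∀ i, ∃ x ∈ U, F i x ≠ 0)
    (hgF : ∀ x ∈ U, (∀ i, F i x ≠ 0) → g x = 0) : Set.EqOn g 0 U := by
  intro y hy
  obtain ⟨x₀, hx₀U, hx₀⟩ := exists_prod_ne_zero_of_analyticOnNhd Finset.univ hUo hU ⟨y, hy⟩
    (fun i _ => hF i) (fun i _ => hF₀ i)
  have hnear : ∀ᶠ x in 𝓝 x₀, ∏ i, F i x ≠ 0 :=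
    (Finset.analyticAt_fun_prod _ fun i _ => hF i x₀ hx₀U).continuousAt.eventually_ne hx₀
  refine hg.eqOn_zero_of_preconnected_of_eventuallyEq_zero hU hx₀U ?_ hy
  filter_upwards [hnear, hUo.mem_nhds hx₀U] with x hx hxU
  exact hgF x hxU fun i => Finset.prod_ne_zero_iff.mp hx i (Finset.mem_univ i)

end IdentityTheorem

/-- `c` is a limit point of the unit vectors `K v / ‖K v‖` as `v → k`. -/
theorem exists_ne_zero_sum_mul_eq_zero_of_frequently {X ι : Type*} [TopologicalSpace X]
    (s : Finset ι) {K : X → ι → ℂ} {k : X} (hK : ∃ᶠ v in 𝓝 k, ∃ i ∈ s, K v i ≠ 0) :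
    ∃ c : ι → ℂ, (∃ i ∈ s, c i ≠ 0) ∧ ∀ M : X → ι → ℂ,
      (∀ i ∈ s, ContinuousAt (fun v => M v i) k) →
      (∀ᶠ v in 𝓝 k, ∑ i ∈ s, K v i * M v i = 0) → ∑ i ∈ s, c i * M k i = 0 := by
  classical
  set K' : X → s → ℂ := fun v i => K v i
  set l := 𝓝 k ⊓ 𝓟 {v | K' v ≠ 0}
  have hl : l.NeBot := by
    refine frequently_iff_neBot.mp (hK.mono fun v ⟨i, hi, hv⟩ h => hv ?_)
    exact congrFun h ⟨i, hi⟩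
  set 𝒰 := Ultrafilter.of l
  have h𝒰 : (𝒰 : Filter X) ≤ 𝓝 k := (Ultrafilter.of_le l).trans inf_le_left
  let w : X → s → ℂ := fun v => ‖K' v‖⁻¹ • K' v
  have hw : ↑(𝒰.map w) ≤ 𝓟 (sphere (0 : s → ℂ) 1) := by
    refine le_principal_iff.2 (mem_map.2 ?_)
    filter_upwards [Ultrafilter.of_le l (mem_inf_of_right (mem_principal_self {v | K' v ≠ 0}))]
      with v (hv : K' v ≠ 0)
    simp [w, norm_smul, norm_ne_zero_iff.mpr hv]
  obtain ⟨c, hc, hwc⟩ := (isCompact_sphere (0 : s → ℂ) 1).ultrafilter_le_nhds _ hw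
  refine ⟨fun i => if h : i ∈ s then c ⟨i, h⟩ else 0, ?_, fun M hM hKM => ?_⟩
  · obtain ⟨⟨i, hi⟩, hci⟩ := Function.ne_iff.mp (ne_zero_of_mem_unit_sphere ⟨c, hc⟩)
    exact ⟨i, hi, by simpa [hi] using hci⟩
  have hlim : Tendsto (fun v => ∑ i : s, w v i * M v i) 𝒰 (𝓝 (∑ i : s, c i * M k i)) :=
    tendsto_finsetSum _ fun i _ => ((continuous_apply i).continuousAt.tendsto.comp hwc).mul
      ((hM i i.2).tendsto.mono_left h𝒰)
  have hzero : ∀ᶠ v in 𝒰, ∑ i : s, w v i * M v i = 0 := by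
    filter_upwards [h𝒰 hKM] with v hv
    have : ∑ i : s, w v i * M v i = ‖K' v‖⁻¹ * ∑ i ∈ s, K v i * M v i := by
      simp only [w, K', Pi.smul_apply, Complex.real_smul, mul_assoc, ← Finset.mul_sum]
      exact congrArg _ (Finset.sum_coe_sort s fun i => K v i * M v i)
    rw [this, hv, mul_zero]
  have hsum : ∑ i : s, c i * M k i = 0 :=
    tendsto_nhds_unique hlim (tendsto_const_nhds.congr' (hzero.mono fun _ h => h.symm))
  rw [← Finset.sum_coe_sort s]
  simpa using hsum

theorem MvPolynomial.mem_restrictDegree_totalDegree {R σ : Type*} [CommSemiring R]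
    (Q : MvPolynomial σ R) :
    Q ∈ restrictDegree σ R Q.totalDegree :=
  (mem_restrictDegree _ _ _).mpr fun _ hs i =>
    (monomial_le_degreeOf i hs).trans (degreeOf_le_totalDegree Q i)

theorem MvPolynomial.restrictDegree_mono {R σ : Type*} [CommSemiring R] {m n : ℕ} (h : m ≤ n) :
    restrictDegree σ R m ≤ restrictDegree σ R n := fun _ hQ =>
  (mem_restrictDegree _ _ _).mpr fun s hs i => ((mem_restrictDegree _ _ _).mp hQ s hs i).trans h

theorem MvPolynomial.exists_restrictDegree_coeff {R σ τ : Type*} [CommSemiring R]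
    (Q : MvPolynomial τ (MvPolynomial σ R)) :
    ∃ D, Q ∈ restrictDegree τ (MvPolynomial σ R) D ∧ ∀ p, Q.coeff p ∈ restrictDegree σ R D := by
  refine ⟨Q.totalDegree + Q.support.sup fun p => (Q.coeff p).totalDegree,
    restrictDegree_mono le_self_add (mem_restrictDegree_totalDegree Q), fun p => ?_⟩
  by_cases hp : p ∈ Q.support
  · exact restrictDegree_mono
      (le_add_left (Finset.le_sup (f := fun p => (Q.coeff p).totalDegree) hp))
      (mem_restrictDegree_totalDegree _)
  · rw [notMem_support_iff.mp hp]
    exact zero_mem _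

theorem MvPolynomial.eval_map_sumAlgEquiv {R S₁ S₂ : Type*} [CommSemiring R]
    (x : S₁ → R) (y : S₂ → R) (Q : MvPolynomial (S₁ ⊕ S₂) R) :
    eval x (map (eval y) (sumAlgEquiv R S₁ S₂ Q)) = eval (Sum.elim x y) Q := by
  induction Q using MvPolynomial.induction_on with
  | C r => simp [sumAlgEquiv_C_inl]
  | add p q hp hq => simp [hp, hq]
  | mul_X p i hp => cases i <;> simp [hp, sumAlgEquiv_X_inl, sumAlgEquiv_X_inr]

/-- A polynomial in variables `(X, V, Y)` read as a polynomial in `Y` (the variable `none`) and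
`X` (the variables `some i`) with coefficients polynomials in `V`. -/
noncomputable def polyOverSecond {R σ : Type*} [CommSemiring R]
    (P : MvPolynomial ((σ ⊕ σ) ⊕ Unit) R) :
    MvPolynomial (Option σ) (MvPolynomial σ R) :=
  sumAlgEquiv R (Option σ) σ
    (rename (Sum.elim (Sum.elim (Sum.inl ∘ some) Sum.inr) fun _ => Sum.inl none) P)

theorem eval_map_polyOverSecond {R σ : Type*} [CommSemiring R] (P : MvPolynomial ((σ ⊕ σ) ⊕ Unit) R)
    (x y : σ → R) (z : R) :
    eval (fun o => o.elim z x) (map (eval y) (polyOverSecond P)) =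
      eval (Sum.elim (Sum.elim x y) fun _ => z) P := by
  rw [polyOverSecond, eval_map_sumAlgEquiv, eval_rename]
  congr 2
  ext ((i | i) | _) <;> rfl

theorem Polynomial.pow_add_sum_div_mul_pow_eq_zero {R K : Type*} [CommSemiring R] [Field K]
    (g : R →+* K) {Q : Polynomial R} {x : K} (hQ : Q.eval₂ g x = 0)
    (hlead : g Q.leadingCoeff ≠ 0) :
    x ^ Q.natDegree + ∑ i : Fin Q.natDegree,
      g (Q.coeff i) / g Q.leadingCoeff * x ^ (i : ℕ) = 0 := by
  rw [eval₂_eq_sum_range, Finset.sum_range_succ, coeff_natDegree] at hQ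
  rw [Fin.sum_univ_eq_sum_range (fun i => g (Q.coeff i) / g Q.leadingCoeff * x ^ i)]
  simp_rw [div_mul_eq_mul_div, ← Finset.sum_div]
  field_simp
  linear_combination hQ

theorem Polynomial.natDegree_pos_of_eval₂_eq_zero {R K : Type*} [CommSemiring R] [Semiring K]
    (g : R →+* K) {Q : Polynomial R} {x : K} (hQ : Q.eval₂ g x = 0)
    (hlead : g Q.leadingCoeff ≠ 0) : 0 < Q.natDegree := by
  rw [Nat.pos_iff_ne_zero]
  intro h0
  rw [eq_C_of_natDegree_eq_zero h0, eval₂_C] at hQ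
  exact hlead (by rwa [leadingCoeff, h0])

theorem polyOverSecond_ne_zero {R σ : Type*} [CommSemiring R]
    {P : MvPolynomial ((σ ⊕ σ) ⊕ Unit) R} (hP : P ≠ 0) : polyOverSecond P ≠ 0 := by
  refine (map_ne_zero_iff _ (sumAlgEquiv R (Option σ) σ).injective).mpr
    ((map_ne_zero_iff _ (rename_injective _ ?_)).mpr hP)
  rintro ((_ | _) | _) ((_ | _) | _) h <;> simp at h ⊢ <;> assumption

section ClearedEval

variable {R σ : Type*} [CommSemiring R] [Fintype σ]

/-- `∏ i, b i ^ D` times the value of `Q` (coefficients mapped by `f`) at `a / b`, written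
without division; since `D - s i` truncates, this needs every exponent of `Q` to be at most `D`. -/
def clearedEval (f : R → ℂ) (D : ℕ) (a b : σ → ℂ) (Q : MvPolynomial σ R) : ℂ :=
  ∑ s ∈ Q.support, f (Q.coeff s) * ∏ i, a i ^ s i * b i ^ (D - s i)

theorem clearedEval_eq (f : R →+* ℂ) {D : ℕ} {a b : σ → ℂ} {Q : MvPolynomial σ R}
    (hQ : Q ∈ restrictDegree σ R D) (hb : ∀ i, b i ≠ 0) :
    clearedEval f D a b Q = (∏ i, b i ^ D) * eval₂ f (fun i => a i / b i) Q := by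
  rw [clearedEval, eval₂_eq', Finset.mul_sum]
  refine Finset.sum_congr rfl fun s hs => ?_
  rw [mul_left_comm, ← Finset.prod_mul_distrib]
  congr 1
  refine Finset.prod_congr rfl fun i _ => ?_
  rw [pow_sub₀ _ (hb i) ((mem_restrictDegree _ _ _).mp hQ s hs i), div_pow]
  field_simp

theorem clearedEval_option_eq (f : R →+* ℂ) {D : ℕ} {Q : MvPolynomial (Option σ) R}
    (hQ : Q ∈ restrictDegree (Option σ) R D) {a b : ℂ} {x y : σ → ℂ} (hb : b ≠ 0)
    (hy : ∀ i, y i ≠ 0) :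
    clearedEval f D (fun o => o.elim a x) (fun o => o.elim b y) Q =
      (b ^ D * ∏ i, y i ^ D) * eval₂ f (fun o => o.elim (a / b) fun i => x i / y i) Q := by
  have hb' : ∀ o : Option σ, o.elim b y ≠ 0 := by
    rintro (_ | i)
    exacts [hb, hy i]
  rw [clearedEval_eq f hQ hb', Fintype.prod_option]
  congr 2
  funext o
  cases o <;> rfl

theorem clearedEval_congr {f g : R → ℂ} (c : ℂ) {D : ℕ} {a b : σ → ℂ} {Q : MvPolynomial σ R}
    (h : ∀ s ∈ Q.support, f (Q.coeff s) = c * g (Q.coeff s)) :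
    clearedEval f D a b Q = c * clearedEval g D a b Q := by
  rw [clearedEval, clearedEval, Finset.mul_sum]
  exact Finset.sum_congr rfl fun s hs => by rw [h s hs, mul_assoc]

theorem analyticAt_clearedEval {E : Type*} [NormedAddCommGroup E] [NormedSpace ℂ E]
    {f : E → R → ℂ} {D : ℕ} {a b : E → σ → ℂ} {Q : MvPolynomial σ R} {x : E}
    (hf : ∀ s ∈ Q.support, AnalyticAt ℂ (fun y => f y (Q.coeff s)) x)
    (ha : ∀ i, AnalyticAt ℂ (fun y => a y i) x) (hb : ∀ i, AnalyticAt ℂ (fun y => b y i) x) :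
    AnalyticAt ℂ (fun y => clearedEval (f y) D (a y) (b y) Q) x :=
  Finset.analyticAt_fun_sum _ fun s hs => (hf s hs).mul <|
    Finset.analyticAt_fun_prod _ fun i _ => ((ha i).pow _).mul ((hb i).pow _)

theorem analyticOnNhd_clearedEval {E : Type*} [NormedAddCommGroup E] [NormedSpace ℂ E]
    {U : Set E} {φnum φden : σ → E → ℂ} (hφn : ∀ i, AnalyticOnNhd ℂ (φnum i) U)
    (hφd : ∀ i, AnalyticOnNhd ℂ (φden i) U) (D : ℕ) (Q : MvPolynomial σ ℂ) :
    AnalyticOnNhd ℂ (fun z => clearedEval (RingHom.id ℂ) D (φnum · z) (φden · z) Q) U :=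
  fun z hz => analyticAt_clearedEval (fun _ _ => analyticAt_const) (fun i => hφn i z hz)
    (fun i => hφd i z hz)

end ClearedEval

theorem exists_ne_zero_clearedEval_eq_zero {X R ρ : Type*} [TopologicalSpace X] [CommSemiring R]
    [Fintype ρ] (Q : MvPolynomial ρ R) (D : ℕ) {K : X → R → ℂ} {k : X}
    (hK : ∃ᶠ v in 𝓝 k, ∃ p ∈ Q.support, K v (Q.coeff p) ≠ 0) :
    ∃ C : MvPolynomial ρ ℂ, C ≠ 0 ∧ C.support ⊆ Q.support ∧ ∀ a b : X → ρ → ℂ,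
      (∀ i, ContinuousAt (fun v => a v i) k) → (∀ i, ContinuousAt (fun v => b v i) k) →
      (∀ᶠ v in 𝓝 k, clearedEval (K v) D (a v) (b v) Q = 0) →
      clearedEval (RingHom.id ℂ) D (a k) (b k) C = 0 := by
  classical
  obtain ⟨c, ⟨p₀, hp₀, hc₀⟩, hc⟩ := exists_ne_zero_sum_mul_eq_zero_of_frequently Q.support
    (K := fun v p => K v (Q.coeff p)) hK
  set C : MvPolynomial ρ ℂ := ∑ p ∈ Q.support, monomial p (c p)
  have hCcoeff (q) : C.coeff q = if q ∈ Q.support then c q else 0 := by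
    simp [C, coeff_sum, coeff_monomial]
  have hCsupp : C.support ⊆ Q.support := fun q hq => by
    by_contra h
    exact mem_support_iff.mp hq (by rw [hCcoeff, if_neg h])
  refine ⟨C, fun h => hc₀ ?_, hCsupp, fun a b ha hb hab => ?_⟩
  · simpa [hCcoeff, hp₀] using congrArg (coeff p₀) h
  have := hc (fun v p => ∏ i, a v i ^ p i * b v i ^ (D - p i))
    (fun p _ => tendsto_finsetProd _ fun i _ => ((ha i).pow _).mul ((hb i).pow _)) hab
  rw [clearedEval, Finset.sum_subset hCsupp fun p _ hp => by rw [notMem_support_iff.mp hp]; simp]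
  rw [← this]
  refine Finset.sum_congr rfl fun p hp => ?_
  simp [hCcoeff, hp]

theorem exists_clearedEval_ne_zero {E σ : Type*} [Fintype σ] {B : Set E} {φnum φden : σ → E → ℂ}
    (hindep : ∀ Q : MvPolynomial σ ℂ,
      (∀ z ∈ B, (∀ i, φden i z ≠ 0) → eval (fun i => φnum i z / φden i z) Q = 0) → Q = 0)
    {D : ℕ} {Q : MvPolynomial σ ℂ} (hQ : Q ≠ 0) (hD : Q ∈ restrictDegree σ ℂ D) :
    ∃ z ∈ B, clearedEval (RingHom.id ℂ) D (φnum · z) (φden · z) Q ≠ 0 := by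
  by_contra! h
  refine hQ (hindep Q fun z hz hden => ?_)
  have := h z hz
  rw [clearedEval_eq _ hD hden, eval₂_id] at this
  exact (mul_eq_zero.mp this).resolve_left
    (Finset.prod_ne_zero_iff.mpr fun i _ => pow_ne_zero _ (hden i))

section Relation

variable {E σ : Type*} [Fintype σ] {ε : ℝ} {φnum φden : σ → E → ℂ} {α β : E × E → ℂ}
  {P : MvPolynomial ((σ ⊕ σ) ⊕ Unit) ℂ} {D : ℕ}

/-- `P(φ(u), φ(v), α(u, v) / β(u, v))` at `w = (u, v)`, with all denominators cleared. -/
noncomputable def clearedRelation (D : ℕ) (φnum φden : σ → E → ℂ) (α β : E × E → ℂ)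
    (P : MvPolynomial ((σ ⊕ σ) ⊕ Unit) ℂ) (w : E × E) : ℂ :=
  clearedEval (clearedEval (RingHom.id ℂ) D (φnum · w.2) (φden · w.2)) D
    (fun o => o.elim (α w) (φnum · w.1)) (fun o => o.elim (β w) (φden · w.1)) (polyOverSecond P)

theorem clearedRelation_eq (hD : polyOverSecond P ∈ restrictDegree (Option σ) _ D)
    (hDcoeff : ∀ p, (polyOverSecond P).coeff p ∈ restrictDegree σ ℂ D) {w : E × E}
    (hu : ∀ i, φden i w.1 ≠ 0) (hv : ∀ i, φden i w.2 ≠ 0) (hβ : β w ≠ 0) :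
    clearedRelation D φnum φden α β P w =
      (∏ i, φden i w.2 ^ D) * (β w ^ D * ∏ i, φden i w.1 ^ D) *
        eval (Sum.elim (Sum.elim (fun i => φnum i w.1 / φden i w.1)
          (fun i => φnum i w.2 / φden i w.2)) fun _ => α w / β w) P := by
  rw [clearedRelation, clearedEval_congr (∏ i, φden i w.2 ^ D)
    (g := eval fun i => φnum i w.2 / φden i w.2)
    (fun p _ => by rw [clearedEval_eq _ (hDcoeff p) hv, eval₂_id]),
    clearedEval_option_eq _ hD hβ hu, ← eval_map, eval_map_polyOverSecond]
  ring

variable [NormedAddCommGroup E] [NormedSpace ℂ E]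

theorem analyticOnNhd_clearedRelation (hφn : ∀ i, AnalyticOnNhd ℂ (φnum i) (ball 0 ε))
    (hφd : ∀ i, AnalyticOnNhd ℂ (φden i) (ball 0 ε))
    (hαa : AnalyticOnNhd ℂ α {w | w.1 + w.2 ∈ ball 0 ε})
    (hβa : AnalyticOnNhd ℂ β {w | w.1 + w.2 ∈ ball 0 ε}) :
    AnalyticOnNhd ℂ (clearedRelation D φnum φden α β P)
      {w | w.1 ∈ ball 0 ε ∧ w.2 ∈ ball 0 ε ∧ w.1 + w.2 ∈ ball 0 ε} := by
  rintro w ⟨hw₁, hw₂, hw⟩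
  refine analyticAt_clearedEval (fun p _ => ?_) (fun o => ?_) (fun o => ?_)
  · exact (analyticOnNhd_clearedEval hφn hφd D _ w.2 hw₂).comp analyticAt_snd
  · cases o
    · exact hαa w hw
    · exact (hφn _ w.1 hw₁).comp analyticAt_fst
  · cases o
    · exact hβa w hw
    · exact (hφd _ w.1 hw₁).comp analyticAt_fst

theorem clearedRelation_eq_zero (hD : polyOverSecond P ∈ restrictDegree (Option σ) _ D)
    (hDcoeff : ∀ p, (polyOverSecond P).coeff p ∈ restrictDegree σ ℂ D)
    (hφn : ∀ i, AnalyticOnNhd ℂ (φnum i) (ball 0 ε))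
    (hφd : ∀ i, AnalyticOnNhd ℂ (φden i) (ball 0 ε))
    (hφdz : ∀ i, ∃ z ∈ ball 0 ε, φden i z ≠ 0)
    (hαa : AnalyticOnNhd ℂ α {w | w.1 + w.2 ∈ ball 0 ε})
    (hβa : AnalyticOnNhd ℂ β {w | w.1 + w.2 ∈ ball 0 ε})
    (hβ₀ : ∃ u ∈ ball 0 ε, β (u, 0) ≠ 0)
    (hPf : ∀ u v, u ∈ ball 0 ε → v ∈ ball 0 ε → u + v ∈ ball 0 ε →
      (∀ i, φden i u ≠ 0 ∧ φden i v ≠ 0) → β (u, v) ≠ 0 →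
      eval (Sum.elim (Sum.elim (fun i => φnum i u / φden i u) (fun i => φnum i v / φden i v))
        (fun _ => α (u, v) / β (u, v))) P = 0)
    {w : E × E} (hw : w.1 ∈ ball 0 ε ∧ w.2 ∈ ball 0 ε ∧ w.1 + w.2 ∈ ball 0 ε) :
    clearedRelation D φnum φden α β P w = 0 := by
  set U : Set (E × E) := {w | w.1 ∈ ball 0 ε ∧ w.2 ∈ ball 0 ε ∧ w.1 + w.2 ∈ ball 0 ε}
  obtain ⟨u₀, hu₀, hβu₀⟩ := hβ₀
  have h0 : (0 : E) ∈ ball 0 ε := mem_ball_self (pos_of_mem_ball hu₀)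
  have hUo : IsOpen U := (isOpen_ball.preimage continuous_fst).inter
    ((isOpen_ball.preimage continuous_snd).inter (isOpen_ball.preimage continuous_add))
  have hUc : IsPreconnected U := by
    have hB := convex_ball (0 : E) ε
    exact ((hB.linear_preimage (LinearMap.fst ℝ E E)).inter
      ((hB.linear_preimage (LinearMap.snd ℝ E E)).inter
        (hB.linear_preimage (LinearMap.fst ℝ E E + LinearMap.snd ℝ E E)))).isPreconnected
  set F : Option σ ⊕ σ → E × E → ℂ :=
    fun i w => Sum.elim (fun o => o.elim (β w) (φden · w.1)) (φden · w.2) i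
  have hF : ∀ i, AnalyticOnNhd ℂ (F i) U := by
    rintro ((_ | i) | i) w hw
    · exact hβa w hw.2.2
    · exact (hφd i w.1 hw.1).comp analyticAt_fst
    · exact (hφd i w.2 hw.2.1).comp analyticAt_snd
  have hF₀ : ∀ i, ∃ w ∈ U, F i w ≠ 0 := by
    rintro ((_ | i) | i)
    · exact ⟨(u₀, 0), ⟨hu₀, h0, by simpa using hu₀⟩, hβu₀⟩
    · obtain ⟨z, hz, hne⟩ := hφdz i
      exact ⟨(z, 0), ⟨hz, h0, by simpa using hz⟩, hne⟩
    · obtain ⟨z, hz, hne⟩ := hφdz i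
      exact ⟨(0, z), ⟨h0, hz, by simpa using hz⟩, hne⟩
  refine (analyticOnNhd_clearedRelation hφn hφd hαa hβa).eqOn_zero_of_forall_ne_zero hUo hUc hF
    hF₀ (fun w hw hden => ?_) hw
  have hu : ∀ i, φden i w.1 ≠ 0 := fun i => hden (.inl (some i))
  have hv : ∀ i, φden i w.2 ≠ 0 := fun i => hden (.inr i)
  have hβw : β w ≠ 0 := hden (.inl none)
  rw [clearedRelation_eq hD hDcoeff hu hv hβw,
    hPf w.1 w.2 hw.1 hw.2.1 hw.2.2 (fun i => ⟨hu i, hv i⟩) hβw, mul_zero]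

theorem exists_ne_zero_eval_slice_eq_zero (hP : P ≠ 0)
    (hD : polyOverSecond P ∈ restrictDegree (Option σ) _ D)
    (hDcoeff : ∀ p, (polyOverSecond P).coeff p ∈ restrictDegree σ ℂ D)
    (hφn : ∀ i, AnalyticOnNhd ℂ (φnum i) (ball 0 ε))
    (hφd : ∀ i, AnalyticOnNhd ℂ (φden i) (ball 0 ε))
    (hindep : ∀ Q : MvPolynomial σ ℂ, (∀ z ∈ ball 0 ε, (∀ i, φden i z ≠ 0) →
      eval (fun i => φnum i z / φden i z) Q = 0) → Q = 0)
    (hαa : AnalyticOnNhd ℂ α {w | w.1 + w.2 ∈ ball 0 ε})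
    (hβa : AnalyticOnNhd ℂ β {w | w.1 + w.2 ∈ ball 0 ε})
    (hrel : ∀ w : E × E, w.1 ∈ ball 0 ε → w.2 ∈ ball 0 ε → w.1 + w.2 ∈ ball 0 ε →
      clearedRelation D φnum φden α β P w = 0)
    {k : E} (hk : k ∈ ball 0 ε) :
    ∃ C : MvPolynomial (Option σ) ℂ, C ≠ 0 ∧ C.support ⊆ (polyOverSecond P).support ∧
      ∀ u ∈ ball 0 ε, u + k ∈ ball 0 ε → (∀ i, φden i u ≠ 0) → β (u, k) ≠ 0 →
        eval (fun o => o.elim (α (u, k) / β (u, k)) fun i => φnum i u / φden i u) C = 0 := by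
  set K : E → MvPolynomial σ ℂ → ℂ := fun v => clearedEval (RingHom.id ℂ) D (φnum · v) (φden · v)
  obtain ⟨p₀, hp₀⟩ := support_nonempty.mpr (polyOverSecond_ne_zero hP)
  have hK : ∃ᶠ v in 𝓝 k, ∃ p ∈ (polyOverSecond P).support,
      K v ((polyOverSecond P).coeff p) ≠ 0 :=
    ((analyticOnNhd_clearedEval hφn hφd D _).frequently_ne_zero (convex_ball 0 ε).isPreconnected
      (exists_clearedEval_ne_zero hindep (mem_support_iff.mp hp₀) (hDcoeff p₀)) hk).mono
      fun v hv => ⟨p₀, hp₀, hv⟩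
  obtain ⟨C, hC, hCsupp, hCrel⟩ := exists_ne_zero_clearedEval_eq_zero (polyOverSecond P) D hK
  refine ⟨C, hC, hCsupp, fun u hu huk hden hβ => ?_⟩
  have hCD : C ∈ restrictDegree (Option σ) ℂ D :=
    (mem_restrictDegree _ _ _).mpr fun s hs => (mem_restrictDegree _ _ _).mp hD s (hCsupp hs)
  have hpair : Continuous fun v : E => (u, v) := continuous_const.prodMk continuous_id
  have hCu := hCrel (fun v o => o.elim (α (u, v)) (φnum · u))
    (fun v o => o.elim (β (u, v)) (φden · u)) (fun o => ?_) (fun o => ?_) ?_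
  · rw [clearedEval_option_eq _ hCD hβ hden, eval₂_id] at hCu
    exact (mul_eq_zero.mp hCu).resolve_left (mul_ne_zero (pow_ne_zero _ hβ)
      (Finset.prod_ne_zero_iff.mpr fun i _ => pow_ne_zero _ (hden i)))
  · cases o
    · exact (hαa (u, k) huk).continuousAt.comp hpair.continuousAt
    · exact continuousAt_const
  · cases o
    · exact (hβa (u, k) huk).continuousAt.comp hpair.continuousAt
    · exact continuousAt_const
  · filter_upwards [isOpen_ball.mem_nhds hk,
      (isOpen_ball.preimage (continuous_const.add continuous_id)).mem_nhds huk] with v hv huv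
    exact hrel (u, v) hu hv huv

theorem exists_mem_slice_eval_ne_zero (hφn : ∀ i, AnalyticOnNhd ℂ (φnum i) (ball 0 ε))
    (hφd : ∀ i, AnalyticOnNhd ℂ (φden i) (ball 0 ε))
    (hφdz : ∀ i, ∃ z ∈ ball 0 ε, φden i z ≠ 0)
    (hindep : ∀ Q : MvPolynomial σ ℂ, (∀ z ∈ ball 0 ε, (∀ i, φden i z ≠ 0) →
      eval (fun i => φnum i z / φden i z) Q = 0) → Q = 0)
    (hβa : AnalyticOnNhd ℂ β {w | w.1 + w.2 ∈ ball 0 ε})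
    {k : E} (hk : k ∈ ball 0 ε) (hβk : ∃ u, u + k ∈ ball 0 ε ∧ β (u, k) ≠ 0)
    {L : MvPolynomial σ ℂ} (hL : L ≠ 0) :
    ∃ u ∈ ball 0 ε, u + k ∈ ball 0 ε ∧ (∀ i, φden i u ≠ 0) ∧ β (u, k) ≠ 0 ∧
      eval (fun i => φnum i u / φden i u) L ≠ 0 := by
  set S : Set E := {u | u + k ∈ ball 0 ε}
  have hSo : IsOpen S := isOpen_ball.preimage (continuous_id.add continuous_const)
  have hS : Convex ℝ S := (convex_ball 0 ε).translate_preimage_left k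
  set V := ball 0 ε ∩ S
  have h0V : (0 : E) ∈ V := ⟨mem_ball_self (pos_of_mem_ball hk), by simpa [S] using hk⟩
  have hV : V ∈ 𝓝 0 := (isOpen_ball.inter hSo).mem_nhds h0V
  have hB := (convex_ball (0 : E) ε).isPreconnected
  have hβS : AnalyticOnNhd ℂ (fun u => β (u, k)) S := fun u hu =>
    (hβa (u, k) hu).comp (f := fun u : E => (u, k)) (analyticAt_id.prod analyticAt_const)
  set F : Option σ → E → ℂ := fun o u => o.elim (β (u, k)) (φden · u)
  have hF : ∀ o, AnalyticOnNhd ℂ (F o) V := by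
    rintro (_ | i) u hu
    exacts [hβS u hu.2, hφd i u hu.1]
  have hF₀ : ∀ o, ∃ u ∈ V, F o u ≠ 0 := by
    rintro (_ | i)
    · obtain ⟨u₀, hu₀, hβu₀⟩ := hβk
      exact hβS.exists_mem_ne_zero_of_mem_nhds hS.isPreconnected ⟨u₀, hu₀, hβu₀⟩ h0V.2 hV
    · exact (hφd i).exists_mem_ne_zero_of_mem_nhds hB (hφdz i) h0V.1 hV
  have hg := analyticOnNhd_clearedEval hφn hφd L.totalDegree L
  by_contra! h
  have hgV := (hg.mono Set.inter_subset_left).eqOn_zero_of_forall_ne_zero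
    (isOpen_ball.inter hSo) ((convex_ball 0 ε).inter hS).isPreconnected hF hF₀ fun u hu hne => by
      have hden : ∀ i, φden i u ≠ 0 := fun i => hne (some i)
      rw [clearedEval_eq _ (mem_restrictDegree_totalDegree L) hden, eval₂_id,
        h u hu.1 hu.2 hden (hne none), mul_zero]
  obtain ⟨u, hu, hne⟩ := hg.exists_mem_ne_zero_of_mem_nhds hB
    (exists_clearedEval_ne_zero hindep hL (mem_restrictDegree_totalDegree L)) h0V.1 hV
  exact hne (hgV hu)

end Relation

theorem statement2_general (n m : ℕ) (ε : ℝ)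
    (φnum φden : Fin m → (Fin n → ℂ) → ℂ)
    (hφn : ∀ i, AnalyticOnNhd ℂ (φnum i) (ball (0 : Fin n → ℂ) ε))
    (hφd : ∀ i, AnalyticOnNhd ℂ (φden i) (ball (0 : Fin n → ℂ) ε))
    (hφdz : ∀ i, ∃ z ∈ ball (0 : Fin n → ℂ) ε, φden i z ≠ 0)
    (hindep : ∀ Q : MvPolynomial (Fin m) ℂ,
      (∀ z ∈ ball (0 : Fin n → ℂ) ε, (∀ i, φden i z ≠ 0) →
        eval (fun i => φnum i z / φden i z) Q = 0) → Q = 0)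
    (α β : ((Fin n → ℂ) × (Fin n → ℂ)) → ℂ)
    (hαa : AnalyticOnNhd ℂ α {w : (Fin n → ℂ) × (Fin n → ℂ) | w.1 + w.2 ∈ ball (0 : Fin n → ℂ) ε})
    (hβa : AnalyticOnNhd ℂ β {w : (Fin n → ℂ) × (Fin n → ℂ) | w.1 + w.2 ∈ ball (0 : Fin n → ℂ) ε})
    (hslice : ∀ k ∈ ball (0 : Fin n → ℂ) ε, ∃ u : Fin n → ℂ,
      u + k ∈ ball (0 : Fin n → ℂ) ε ∧ β (u, k) ≠ 0)
    (P : MvPolynomial ((Fin m ⊕ Fin m) ⊕ Unit) ℂ) (hP : P ≠ 0)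
    (hPf : ∀ u v : Fin n → ℂ, u ∈ ball (0 : Fin n → ℂ) ε → v ∈ ball (0 : Fin n → ℂ) ε →
      u + v ∈ ball (0 : Fin n → ℂ) ε →
      (∀ i, φden i u ≠ 0 ∧ φden i v ≠ 0) → β (u, v) ≠ 0 →
      eval (Sum.elim (Sum.elim (fun i => φnum i u / φden i u) (fun i => φnum i v / φden i v))
        (fun _ => α (u, v) / β (u, v))) P = 0) :
    ∃ N : ℕ, ∀ k ∈ ball (0 : Fin n → ℂ) ε, ∃ h : ℕ, 1 ≤ h ∧ h ≤ N ∧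
      ∃ R S : Fin h → MvPolynomial (Fin m) ℂ,
        (∀ i j, (R i).degreeOf j ≤ N ∧ (S i).degreeOf j ≤ N) ∧
        (∀ i, ∃ z ∈ ball (0 : Fin n → ℂ) ε, (∀ j, φden j z ≠ 0) ∧
          eval (fun j => φnum j z / φden j z) (S i) ≠ 0) ∧
        ∃ δ : ℝ, 0 < δ ∧ ∀ u ∈ ball (0 : Fin n → ℂ) δ, u + k ∈ ball (0 : Fin n → ℂ) ε →
          (∀ j, φden j u ≠ 0) → β (u, k) ≠ 0 →
          (∀ i, eval (fun j => φnum j u / φden j u) (S i) ≠ 0) →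
          (α (u, k) / β (u, k)) ^ h +
            ∑ i : Fin h, (eval (fun j => φnum j u / φden j u) (R i) /
                eval (fun j => φnum j u / φden j u) (S i)) *
              (α (u, k) / β (u, k)) ^ (i : ℕ) = 0 := by
  obtain ⟨D, hD, hDcoeff⟩ := exists_restrictDegree_coeff (polyOverSecond P)
  refine ⟨(polyOverSecond P).totalDegree, fun k hk => ?_⟩
  obtain ⟨u₀, hu₀, hβu₀⟩ := hslice 0 (mem_ball_self (pos_of_mem_ball hk))
  have hrel : ∀ w : (Fin n → ℂ) × (Fin n → ℂ), w.1 ∈ ball 0 ε → w.2 ∈ ball 0 ε →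
      w.1 + w.2 ∈ ball 0 ε → clearedRelation D φnum φden α β P w = 0 :=
    fun w hw₁ hw₂ hw => clearedRelation_eq_zero hD hDcoeff hφn hφd hφdz hαa hβa
      ⟨u₀, by simpa using hu₀, hβu₀⟩ hPf ⟨hw₁, hw₂, hw⟩
  obtain ⟨C, hC, hCsupp, hCrel⟩ :=
    exists_ne_zero_eval_slice_eq_zero hP hD hDcoeff hφn hφd hindep hαa hβa hrel hk
  set Q := optionEquivLeft ℂ (Fin m) C
  have hQrel : ∀ u ∈ ball 0 ε, u + k ∈ ball 0 ε → (∀ j, φden j u ≠ 0) → β (u, k) ≠ 0 →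
      Q.eval₂ (eval fun j => φnum j u / φden j u) (α (u, k) / β (u, k)) = 0 := by
    intro u hu huk hden hβ
    rw [← Polynomial.eval_map, ← optionEquivLeft_elim_eval]
    exact hCrel u hu huk hden hβ
  have hQ : Q ≠ 0 := (map_ne_zero_iff _ (optionEquivLeft ℂ (Fin m)).injective).mpr hC
  obtain ⟨z, hz, hzk, hzden, hzβ, hzQ⟩ := exists_mem_slice_eval_ne_zero hφn hφd hφdz hindep hβa
    hk (hslice k hk) (Polynomial.leadingCoeff_ne_zero.mpr hQ)
  have hdeg : 0 < Q.natDegree :=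
    Polynomial.natDegree_pos_of_eval₂_eq_zero _ (hQrel z hz hzk hzden hzβ) hzQ
  have hdegC : C.totalDegree ≤ (polyOverSecond P).totalDegree :=
    Finset.sup_le fun s hs => le_totalDegree (hCsupp hs)
  have hcoeff (i : ℕ) (j : Fin m) : (Q.coeff i).degreeOf j ≤ (polyOverSecond P).totalDegree :=
    (degreeOf_le_totalDegree _ _).trans ((totalDegree_coeff_optionEquivLeft_le _ _ C i).trans hdegC)
  refine ⟨Q.natDegree, hdeg, (natDegree_optionEquivLeft _ C).trans_le
    ((degreeOf_le_totalDegree _ _).trans hdegC), fun i => Q.coeff i, fun _ => Q.leadingCoeff,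
    fun i j => ⟨hcoeff i j, hcoeff _ j⟩, fun _ => ⟨z, hz, hzden, hzQ⟩, ε, pos_of_mem_ball hk,
    fun u hu huk hden hβ hS => Polynomial.pow_add_sum_div_mul_pow_eq_zero _
      (hQrel u hu huk hden hβ) (hS ⟨0, hdeg⟩)⟩

/-- (Lemma "core".)  Let `φ₁, …, φ_m` be meromorphic on `B_n(ε)`, algebraically
independent over `ℂ`.  Let `f = α/β` be meromorphic on `D = {(a,b) : a+b ∈ B_n(ε)}`, with
`β(·,k)` not identically zero on each slice, and suppose `f(u,v)` is algebraic over
`ℂ(φ(u), φ(v))`.  Then there exists `N ∈ ℕ` such that for every `k ∈ B_n(ε)` there are `h ≤ N`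
and polynomials `R₀,…,R_{h−1}, S₀,…,S_{h−1}` of degree at most `N` in each variable, with no
`Sᵢ(φ)` identically zero, such that
`f(u,k)^h + ∑ᵢ (Rᵢ(φ(u))/Sᵢ(φ(u))) f(u,k)^i = 0` near `0` where all denominators are nonzero. -/
theorem statement2 (n m : ℕ) (hn : 1 ≤ n) (hm : 1 ≤ m) (ε : ℝ) (hε : 0 < ε)
    (φnum φden : Fin m → (Fin n → ℂ) → ℂ)
    (hφn : ∀ i, AnalyticOnNhd ℂ (φnum i) (ball (0 : Fin n → ℂ) ε))
    (hφd : ∀ i, AnalyticOnNhd ℂ (φden i) (ball (0 : Fin n → ℂ) ε))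
    (hφdz : ∀ i, ∃ z ∈ ball (0 : Fin n → ℂ) ε, φden i z ≠ 0)
    (hindep : ∀ Q : MvPolynomial (Fin m) ℂ,
      (∀ z ∈ ball (0 : Fin n → ℂ) ε, (∀ i, φden i z ≠ 0) →
        eval (fun i => φnum i z / φden i z) Q = 0) → Q = 0)
    (α β : ((Fin n → ℂ) × (Fin n → ℂ)) → ℂ)
    (hαa : AnalyticOnNhd ℂ α {w : (Fin n → ℂ) × (Fin n → ℂ) | w.1 + w.2 ∈ ball (0 : Fin n → ℂ) ε})
    (hβa : AnalyticOnNhd ℂ β {w : (Fin n → ℂ) × (Fin n → ℂ) | w.1 + w.2 ∈ ball (0 : Fin n → ℂ) ε})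
    (hβz : ∃ w : (Fin n → ℂ) × (Fin n → ℂ), w.1 + w.2 ∈ ball (0 : Fin n → ℂ) ε ∧ β w ≠ 0)
    (hslice : ∀ k ∈ ball (0 : Fin n → ℂ) ε, ∃ u : Fin n → ℂ,
      u + k ∈ ball (0 : Fin n → ℂ) ε ∧ β (u, k) ≠ 0)
    (P : MvPolynomial ((Fin m ⊕ Fin m) ⊕ Unit) ℂ) (hP : P ≠ 0)
    (hPf : ∀ u v : Fin n → ℂ, u ∈ ball (0 : Fin n → ℂ) ε → v ∈ ball (0 : Fin n → ℂ) ε →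
      u + v ∈ ball (0 : Fin n → ℂ) ε →
      (∀ i, φden i u ≠ 0 ∧ φden i v ≠ 0) → β (u, v) ≠ 0 →
      eval (Sum.elim (Sum.elim (fun i => φnum i u / φden i u) (fun i => φnum i v / φden i v))
        (fun _ => α (u, v) / β (u, v))) P = 0) :
    ∃ N : ℕ, ∀ k ∈ ball (0 : Fin n → ℂ) ε, ∃ h : ℕ, 1 ≤ h ∧ h ≤ N ∧
      ∃ R S : Fin h → MvPolynomial (Fin m) ℂ,
        (∀ i j, (R i).degreeOf j ≤ N ∧ (S i).degreeOf j ≤ N) ∧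
        (∀ i, ∃ z ∈ ball (0 : Fin n → ℂ) ε, (∀ j, φden j z ≠ 0) ∧
          eval (fun j => φnum j z / φden j z) (S i) ≠ 0) ∧
        ∃ δ : ℝ, 0 < δ ∧ ∀ u ∈ ball (0 : Fin n → ℂ) δ, u + k ∈ ball (0 : Fin n → ℂ) ε →
          (∀ j, φden j u ≠ 0) → β (u, k) ≠ 0 →
          (∀ i, eval (fun j => φnum j u / φden j u) (S i) ≠ 0) →
          (α (u, k) / β (u, k)) ^ h +
            ∑ i : Fin h, (eval (fun j => φnum j u / φden j u) (R i) /
                eval (fun j => φnum j u / φden j u) (S i)) *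
              (α (u, k) / β (u, k)) ^ (i : ℕ) = 0 :=
  statement2_general n m ε φnum φden hφn hφd hφdz hindep α β hαa hβa hslice P hP hPf
end

section
/- Let ε > 0 and let φ₁, …, φ_m be meromorphic functions on B_n(ε). Suppose the differentials dφ₁, …, dφ_m are linearly independent over the field of meromorphic functions on B_n(ε), i.e. whenever g₁, …, g_m are meromorphic on B_n(ε) with ∑_{i=1}^m gᵢ · ∂ⱼφᵢ = 0 as meromorphic functions for every j = 1, …, n, then every gᵢ = 0. Then φ₁, …, φ_m are algebraically independent over ℂ. -/
/-!
Let `Q` vanish on `φ = (φ₁, …, φ_m)`. Differentiating `Q(φ) = 0` along each coordinate line gives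
`∑ᵢ (∂ᵢQ)(φ) · ∂ⱼφᵢ = 0` for all `j`. The coefficients `(∂ᵢQ)(φ)` are again meromorphic (clear
denominators with `∏ₖ φdenₖ ^ deg`), so the linear independence of the `dφᵢ` forces `(∂ᵢQ)(φ) = 0`.
By induction on the total degree every `∂ᵢQ` is zero, so `Q` is a constant; it vanishes at a point
where all `φdenᵢ` are nonzero, which exists by the identity theorem on the connected ball.
-/

open Metric MvPolynomial

noncomputable def pderivAt (n : ℕ) (j : Fin n) (F : (Fin n → ℂ) → ℂ) (z : Fin n → ℂ) : ℂ :=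
  fderiv ℂ F z (Pi.single j 1)

noncomputable def meroPDeriv (n : ℕ) (num den : (Fin n → ℂ) → ℂ) (j : Fin n)
    (z : Fin n → ℂ) : ℂ :=
  (den z * pderivAt n j num z - num z * pderivAt n j den z) / (den z) ^ 2

open Filter Topology

namespace MvPolynomial

variable {R σ : Type*} [CommSemiring R]

theorem totalDegree_pderiv_le (i : σ) (p : MvPolynomial σ R) :
    (pderiv i p).totalDegree ≤ p.totalDegree - 1 := by
  refine Finset.sup_le fun c hc => ?_
  rw [mem_support_iff, coeff_pderiv] at hc
  have hdeg := le_totalDegree (mem_support_iff.mpr (left_ne_zero_of_mul hc))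
  rw [Finsupp.sum_add_index' (fun _ => rfl) (fun _ _ _ => rfl), Finsupp.sum_single_index rfl]
    at hdeg
  omega

theorem totalDegree_pderiv_lt {i : σ} {p : MvPolynomial σ R} (h : pderiv i p ≠ 0) :
    (pderiv i p).totalDegree < p.totalDegree := by
  have hp : p.totalDegree ≠ 0 := fun h0 =>
    h (by rw [totalDegree_eq_zero_iff_eq_C.mp h0, pderiv_C])
  have := totalDegree_pderiv_le i p
  omega

theorem eq_C_of_forall_pderiv_eq_zero [NoZeroDivisors R] [CharZero R] {p : MvPolynomial σ R}
    (h : ∀ i, pderiv i p = 0) : p = C (coeff 0 p) := by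
  refine totalDegree_eq_zero_iff_eq_C.mp ((totalDegree_eq_zero_iff _ p).mpr fun c hc i => ?_)
  by_contra hci
  have hle : Finsupp.single i 1 ≤ c :=
    Finsupp.single_le_iff.mpr (Nat.one_le_iff_ne_zero.mpr hci)
  have := coeff_pderiv (i := i) p (c - Finsupp.single i 1)
  rw [h i, coeff_zero, tsub_add_cancel_of_le hle, eq_comm, mul_eq_zero] at this
  exact this.elim (mem_support_iff.mp hc) (Nat.cast_add_one_ne_zero _)

-- `p(num/den) · ∏ₖ denₖ ^ totalDegree p`, written as a polynomial in `num` and `den` so that it is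
-- analytic also where some `denₖ` vanishes.
noncomputable def clearedEval {K ι E : Type*} [Field K] [Fintype ι] (p : MvPolynomial ι K)
    (num den : ι → E → K) (z : E) : K :=
  ∑ c ∈ p.support, coeff c p * ∏ k, num k z ^ c k * den k z ^ (p.totalDegree - c k)

theorem clearedEval_eq {K ι E : Type*} [Field K] [Fintype ι] (p : MvPolynomial ι K)
    {num den : ι → E → K} {z : E} (hz : ∀ k, den k z ≠ 0) :
    clearedEval p num den z =
      (∏ k, den k z ^ p.totalDegree) * eval (fun k => num k z / den k z) p := by
  rw [clearedEval, eval_eq', Finset.mul_sum]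
  refine Finset.sum_congr rfl fun c hc => ?_
  rw [mul_left_comm, ← Finset.prod_mul_distrib]
  congr 1
  refine Finset.prod_congr rfl fun k _ => ?_
  have hck : c k ≤ p.totalDegree :=
    (monomial_le_degreeOf k hc).trans (degreeOf_le_totalDegree p k)
  rw [← Nat.sub_add_cancel hck, pow_add, Nat.sub_add_cancel hck, div_pow]
  field_simp [hz k]

theorem analyticOnNhd_clearedEval {𝕜 ι E : Type*} [NontriviallyNormedField 𝕜] [Fintype ι]
    [NormedAddCommGroup E] [NormedSpace 𝕜 E] (p : MvPolynomial ι 𝕜) {num den : ι → E → 𝕜}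
    {U : Set E} (hnum : ∀ k, AnalyticOnNhd 𝕜 (num k) U)
    (hden : ∀ k, AnalyticOnNhd 𝕜 (den k) U) :
    AnalyticOnNhd 𝕜 (clearedEval p num den) U :=
  Finset.analyticOnNhd_fun_sum _ fun _ _ => analyticOnNhd_const.mul
    (Finset.analyticOnNhd_fun_prod _ fun k _ => ((hnum k).pow _).mul ((hden k).pow _))

end MvPolynomial

theorem HasDerivAt.mvPolynomial_eval {𝕜 σ : Type*} [NontriviallyNormedField 𝕜] [Fintype σ]
    (p : MvPolynomial σ 𝕜) {f : 𝕜 → σ → 𝕜} {f' : σ → 𝕜} {t : 𝕜}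
    (hf : ∀ i, HasDerivAt (f · i) (f' i) t) :
    HasDerivAt (fun s => eval (f s) p) (∑ i, eval (f t) (pderiv i p) * f' i) t := by
  classical
  induction p using MvPolynomial.induction_on with
  | C a => simpa using hasDerivAt_const t a
  | add p q hp hq => simpa [add_mul, Finset.sum_add_distrib] using hp.fun_add hq
  | mul_X p i hp =>
    simp only [map_mul, eval_X]
    refine (hp.fun_mul (hf i)).congr_deriv ?_
    simp only [pderiv_mul, pderiv_X, Pi.single_apply, mul_ite, mul_one, mul_zero, map_add,
      map_mul, eval_X, apply_ite (eval (f t)), map_zero, add_mul, ite_mul, zero_mul,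
      Finset.sum_add_distrib, Finset.sum_ite_eq, Finset.mem_univ, if_true, Finset.sum_mul]
    congr 1
    exact Finset.sum_congr rfl fun _ _ => mul_right_comm _ _ _

theorem hasDerivAt_pderivAt_line {n : ℕ} {F : (Fin n → ℂ) → ℂ} {z : Fin n → ℂ}
    (hF : DifferentiableAt ℂ F z) (j : Fin n) :
    HasDerivAt (fun t : ℂ => F (z + t • Pi.single j 1)) (pderivAt n j F z) 0 := by
  have hline : HasDerivAt (fun t : ℂ => z + t • Pi.single j (1 : ℂ)) (Pi.single j 1) 0 := by
    simpa using ((hasDerivAt_id (0 : ℂ)).smul_const (Pi.single j (1 : ℂ))).const_add z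
  have hF' : HasFDerivAt F (fderiv ℂ F z) (z + (0 : ℂ) • Pi.single j 1) := by
    simpa using hF.hasFDerivAt
  exact hF'.comp_hasDerivAt 0 hline

theorem hasDerivAt_meroPDeriv_line {n : ℕ} {num den : (Fin n → ℂ) → ℂ} {z : Fin n → ℂ}
    (hnum : DifferentiableAt ℂ num z) (hden : DifferentiableAt ℂ den z) (hz : den z ≠ 0)
    (j : Fin n) :
    HasDerivAt (fun t : ℂ => num (z + t • Pi.single j 1) / den (z + t • Pi.single j 1))
      (meroPDeriv n num den j z) 0 := by
  refine ((hasDerivAt_pderivAt_line hnum j).fun_div (hasDerivAt_pderivAt_line hden j)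
    (by simpa)).congr_deriv ?_
  simp only [zero_smul, add_zero, meroPDeriv]
  ring

theorem AnalyticOnNhd.exists_forall_ne_zero_of_isPreconnected {𝕜 E ι : Type*}
    [NontriviallyNormedField 𝕜] [NormedAddCommGroup E] [NormedSpace 𝕜 E] {U : Set E}
    (hU : IsOpen U) (hUc : IsPreconnected U) (hUne : U.Nonempty) {f : ι → E → 𝕜}
    (hf : ∀ i, AnalyticOnNhd 𝕜 (f i) U) (hf0 : ∀ i, ∃ z ∈ U, f i z ≠ 0) (s : Finset ι) :
    ∃ z ∈ U, ∀ i ∈ s, f i z ≠ 0 := by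
  classical
  induction s using Finset.induction_on with
  | empty => exact ⟨hUne.some, hUne.some_mem, by simp⟩
  | insert a s _ ih =>
    obtain ⟨z₀, hz₀, hs⟩ := ih
    by_contra! hcon
    have hev : f a =ᶠ[𝓝 z₀] 0 := by
      filter_upwards [hU.mem_nhds hz₀, s.eventually_all.mpr fun i hi =>
        (hf i z₀ hz₀).continuousAt.eventually_ne (hs i hi)] with z hz hzs
      obtain ⟨i, hi, h0⟩ := hcon z hz
      rcases Finset.mem_insert.mp hi with rfl | hi
      · exact h0
      · exact absurd h0 (hzs i hi)
    obtain ⟨z₁, hz₁, hne⟩ := hf0 a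
    exact hne ((hf a).eqOn_zero_of_preconnected_of_eventuallyEq_zero hUc hz₀ hev hz₁)

section Meromorphic

variable {n m : ℕ} {U : Set (Fin n → ℂ)} {φnum φden : Fin m → (Fin n → ℂ) → ℂ}
  {Q : MvPolynomial (Fin m) ℂ}

def IsAlgRelation (U : Set (Fin n → ℂ)) (φnum φden : Fin m → (Fin n → ℂ) → ℂ)
    (Q : MvPolynomial (Fin m) ℂ) : Prop :=
  ∀ z ∈ U, (∀ i, φden i z ≠ 0) → eval (fun i => φnum i z / φden i z) Q = 0

def DifferentialsLinearIndependent (U : Set (Fin n → ℂ))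
    (φnum φden : Fin m → (Fin n → ℂ) → ℂ) : Prop :=
  ∀ gnum gden : Fin m → (Fin n → ℂ) → ℂ,
    (∀ i, AnalyticOnNhd ℂ (gnum i) U) → (∀ i, AnalyticOnNhd ℂ (gden i) U) →
    (∀ i, ∃ z ∈ U, gden i z ≠ 0) →
    (∀ j : Fin n, ∀ z ∈ U, (∀ i, gden i z ≠ 0) → (∀ i, φden i z ≠ 0) →
      ∑ i : Fin m, (gnum i z / gden i z) * meroPDeriv n (φnum i) (φden i) j z = 0) →
    ∀ i, ∀ z ∈ U, gden i z ≠ 0 → gnum i z = 0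

namespace IsAlgRelation

theorem sum_eval_pderiv_mul_meroPDeriv_eq_zero (hU : IsOpen U)
    (hφn : ∀ i, AnalyticOnNhd ℂ (φnum i) U) (hφd : ∀ i, AnalyticOnNhd ℂ (φden i) U)
    (hQ : IsAlgRelation U φnum φden Q) {z : Fin n → ℂ} (hz : z ∈ U) (hdz : ∀ i, φden i z ≠ 0)
    (j : Fin n) :
    ∑ i, eval (fun k => φnum k z / φden k z) (pderiv i Q) * meroPDeriv n (φnum i) (φden i) j z
      = 0 := by
  set γ : ℂ → Fin n → ℂ := fun t => z + t • Pi.single j 1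
  have hγ : Tendsto γ (𝓝 0) (𝓝 z) := by
    simpa [γ] using ((continuous_id.smul continuous_const).const_add z).tendsto (0 : ℂ)
  have hderiv := HasDerivAt.mvPolynomial_eval Q (f := fun t k => φnum k (γ t) / φden k (γ t))
    fun k => hasDerivAt_meroPDeriv_line (hφn k z hz).differentiableAt
      (hφd k z hz).differentiableAt (hdz k) j
  have hlocal :
      (fun t => eval (fun k => φnum k (γ t) / φden k (γ t)) Q) =ᶠ[𝓝 0] fun _ => 0 := by
    have hgood : ∀ᶠ w in 𝓝 z, w ∈ U ∧ ∀ i, φden i w ≠ 0 := (hU.eventually_mem hz).and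
      (eventually_all.mpr fun i => (hφd i z hz).continuousAt.eventually_ne (hdz i))
    filter_upwards [hγ.eventually hgood] with t ht using hQ _ ht.1 ht.2
  simpa [γ] using hderiv.unique ((hasDerivAt_const 0 0).congr_of_eventuallyEq hlocal)

theorem pderiv (hU : IsOpen U) (hφn : ∀ i, AnalyticOnNhd ℂ (φnum i) U)
    (hφd : ∀ i, AnalyticOnNhd ℂ (φden i) U) {z₀ : Fin n → ℂ} (hz₀ : z₀ ∈ U)
    (hden₀ : ∀ i, φden i z₀ ≠ 0) (hli : DifferentialsLinearIndependent U φnum φden)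
    (hQ : IsAlgRelation U φnum φden Q) (i : Fin m) :
    IsAlgRelation U φnum φden (MvPolynomial.pderiv i Q) := by
  set gden : Fin m → (Fin n → ℂ) → ℂ :=
    fun i z => ∏ k, φden k z ^ (MvPolynomial.pderiv i Q).totalDegree
  have hgden : ∀ i z, (∀ k, φden k z ≠ 0) → gden i z ≠ 0 := fun _ _ h =>
    Finset.prod_ne_zero_iff.mpr fun k _ => pow_ne_zero _ (h k)
  have hvanish := hli (fun i => clearedEval (MvPolynomial.pderiv i Q) φnum φden) gden
    (fun i => analyticOnNhd_clearedEval _ hφn hφd)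
    (fun i => Finset.analyticOnNhd_fun_prod _ fun k _ => (hφd k).pow _)
    (fun i => ⟨z₀, hz₀, hgden i z₀ hden₀⟩) ?_
  · intro z hz hdz
    have h0 := hvanish i z hz (hgden i z hdz)
    rw [clearedEval_eq _ hdz] at h0
    exact (mul_eq_zero.mp h0).resolve_left (hgden i z hdz)
  · intro j z hz _ hdz
    rw [← hQ.sum_eval_pderiv_mul_meroPDeriv_eq_zero hU hφn hφd hz hdz j]
    refine Finset.sum_congr rfl fun i _ => ?_
    rw [clearedEval_eq _ hdz, mul_div_cancel_left₀ _ (hgden i z hdz)]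

theorem eq_zero (hU : IsOpen U) (hφn : ∀ i, AnalyticOnNhd ℂ (φnum i) U)
    (hφd : ∀ i, AnalyticOnNhd ℂ (φden i) U) {z₀ : Fin n → ℂ} (hz₀ : z₀ ∈ U)
    (hden₀ : ∀ i, φden i z₀ ≠ 0) (hli : DifferentialsLinearIndependent U φnum φden)
    (hQ : IsAlgRelation U φnum φden Q) : Q = 0 := by
  induction h : Q.totalDegree using Nat.strong_induction_on generalizing Q with
  | _ d ih =>
    have hpderiv : ∀ i, MvPolynomial.pderiv i Q = 0 := fun i => by
      by_contra hne
      exact hne (ih _ (h ▸ totalDegree_pderiv_lt hne) (hQ.pderiv hU hφn hφd hz₀ hden₀ hli i) rfl)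
    rw [eq_C_of_forall_pderiv_eq_zero hpderiv] at hQ ⊢
    simpa using hQ z₀ hz₀ hden₀

end IsAlgRelation

end Meromorphic

theorem statement7_general (n m : ℕ) (ε : ℝ) (hε : 0 < ε)
    (φnum φden : Fin m → (Fin n → ℂ) → ℂ)
    (hφn : ∀ i, AnalyticOnNhd ℂ (φnum i) (ball (0 : Fin n → ℂ) ε))
    (hφd : ∀ i, AnalyticOnNhd ℂ (φden i) (ball (0 : Fin n → ℂ) ε))
    (hφdz : ∀ i, ∃ z ∈ ball (0 : Fin n → ℂ) ε, φden i z ≠ 0)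
    -- `dφ₁, …, dφ_m` are linearly independent over the meromorphic functions on `B_n(ε)`
    (hli : ∀ gnum gden : Fin m → (Fin n → ℂ) → ℂ,
      (∀ i, AnalyticOnNhd ℂ (gnum i) (ball (0 : Fin n → ℂ) ε)) →
      (∀ i, AnalyticOnNhd ℂ (gden i) (ball (0 : Fin n → ℂ) ε)) →
      (∀ i, ∃ z ∈ ball (0 : Fin n → ℂ) ε, gden i z ≠ 0) →
      (∀ j : Fin n, ∀ z ∈ ball (0 : Fin n → ℂ) ε, (∀ i, gden i z ≠ 0) →
        (∀ i, φden i z ≠ 0) →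
        ∑ i : Fin m, (gnum i z / gden i z) * meroPDeriv n (φnum i) (φden i) j z = 0) →
      ∀ i, ∀ z ∈ ball (0 : Fin n → ℂ) ε, gden i z ≠ 0 → gnum i z = 0) :
    -- `φ₁, …, φ_m` are algebraically independent over `ℂ`
    ∀ Q : MvPolynomial (Fin m) ℂ,
      (∀ z ∈ ball (0 : Fin n → ℂ) ε, (∀ i, φden i z ≠ 0) →
        eval (fun i => φnum i z / φden i z) Q = 0) → Q = 0 := by
  intro Q hQ
  obtain ⟨z₀, hz₀, hden₀⟩ := AnalyticOnNhd.exists_forall_ne_zero_of_isPreconnected isOpen_ball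
    (convex_ball 0 ε).isPreconnected ⟨0, mem_ball_self hε⟩ hφd hφdz Finset.univ
  exact IsAlgRelation.eq_zero isOpen_ball hφn hφd hz₀ (fun i => hden₀ i (Finset.mem_univ i))
    hli hQ

/-- Let `φ₁,…,φ_m` be meromorphic on `B_n(ε)`.  If the differentials
`dφ₁,…,dφ_m` are linearly independent over the field of meromorphic functions on `B_n(ε)`,
then `φ₁,…,φ_m` are algebraically independent over `ℂ`. -/
theorem statement7 (n m : ℕ) (hn : 1 ≤ n) (hm : 1 ≤ m) (ε : ℝ) (hε : 0 < ε)
    (φnum φden : Fin m → (Fin n → ℂ) → ℂ)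
    (hφn : ∀ i, AnalyticOnNhd ℂ (φnum i) (ball (0 : Fin n → ℂ) ε))
    (hφd : ∀ i, AnalyticOnNhd ℂ (φden i) (ball (0 : Fin n → ℂ) ε))
    (hφdz : ∀ i, ∃ z ∈ ball (0 : Fin n → ℂ) ε, φden i z ≠ 0)
    -- `dφ₁, …, dφ_m` are linearly independent over the meromorphic functions on `B_n(ε)`
    (hli : ∀ gnum gden : Fin m → (Fin n → ℂ) → ℂ,
      (∀ i, AnalyticOnNhd ℂ (gnum i) (ball (0 : Fin n → ℂ) ε)) →
      (∀ i, AnalyticOnNhd ℂ (gden i) (ball (0 : Fin n → ℂ) ε)) →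
      (∀ i, ∃ z ∈ ball (0 : Fin n → ℂ) ε, gden i z ≠ 0) →
      (∀ j : Fin n, ∀ z ∈ ball (0 : Fin n → ℂ) ε, (∀ i, gden i z ≠ 0) →
        (∀ i, φden i z ≠ 0) →
        ∑ i : Fin m, (gnum i z / gden i z) * meroPDeriv n (φnum i) (φden i) j z = 0) →
      ∀ i, ∀ z ∈ ball (0 : Fin n → ℂ) ε, gden i z ≠ 0 → gnum i z = 0) :
    -- `φ₁, …, φ_m` are algebraically independent over `ℂ`
    ∀ Q : MvPolynomial (Fin m) ℂ,
      (∀ z ∈ ball (0 : Fin n → ℂ) ε, (∀ i, φden i z ≠ 0) →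
        eval (fun i => φnum i z / φden i z) Q = 0) → Q = 0 :=
  statement7_general n m ε hε φnum φden hφn hφd hφdz hli
end

section
/- Let Λ₁ ⊆ Λ₂ be lattices of (ℂ,+) with finite index [Λ₂ : Λ₁] = n. Then there exist a₁, …, aₙ ∈ Λ₂ and a constant C ∈ ℂ such that ℘_{Λ₂}(u) = ∑_{i=1}^n ℘_{Λ₁}(u + aᵢ) + C for all u ∈ ℂ \ Λ₂. -/
/-!
If `a₁, …, aₙ` represent the cosets of `Λ₁` in `Λ₂`, then `(i, ω) ↦ ω - aᵢ` is a bijection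
`Fin n × Λ₁ ≃ Λ₂`, and the summand of `℘` at `ω - a` splits as
`1/(u-(ω-a))² - 1/(ω-a)² = (1/(u+a-ω)² - 1/ω²) - (1/(a-ω)² - 1/ω²)`.
Summing over `ω ∈ Λ₁` and then over `i` gives `℘_{Λ₂}(u) = ∑ᵢ (℘_{Λ₁}(u+aᵢ) - ℘_{Λ₁}(aᵢ))`,
so `C = -∑ᵢ ℘_{Λ₁}(aᵢ)`. Since `1/0 = 0`, this is meaningful also for the representative lying
in `Λ₁`: its singular term `1/(aᵢ-ω)²` at `ω = aᵢ` is read as `0`.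
-/

/-- `Λ` is a lattice of `(ℂ,+)`: an additive subgroup generated by two complex numbers that are
linearly independent over `ℝ`. -/
def IsComplexLattice (Λ : AddSubgroup ℂ) : Prop :=
  ∃ ω₁ ω₂ : ℂ, LinearIndependent ℝ ![ω₁, ω₂] ∧ Λ = AddSubgroup.closure {ω₁, ω₂}

/-- The Weierstrass function `℘_Λ(u) = 1/u² + ∑_{ω ∈ Λ, ω ≠ 0} (1/(u−ω)² − 1/ω²)`. -/
noncomputable def wp (Λ : AddSubgroup ℂ) (u : ℂ) : ℂ :=
  1 / u ^ 2 + ∑' ω : {w : ℂ // w ∈ Λ ∧ w ≠ 0}, (1 / (u - ω.1) ^ 2 - 1 / ω.1 ^ 2)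

open PeriodPair

theorem hasSum_prod_of_fintype {ι β α : Type*} [Fintype ι] [AddCommMonoid α]
    [TopologicalSpace α] [ContinuousAdd α] {f : ι × β → α} {g : ι → α}
    (hf : ∀ i, HasSum (fun b ↦ f (i, b)) (g i)) : HasSum f (∑ i, g i) := by
  classical
  have hfiber : ∀ i, HasSum (fun p : ι × β ↦ if p.1 = i then f p else 0) (g i) := fun i ↦
    (Prod.mk_right_injective i).hasSum_iff (fun p hp ↦ if_neg fun h ↦ hp ⟨p.2, by rw [← h]⟩)
      |>.mp (by simpa [Function.comp_def] using hf i)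
  simpa using hasSum_sum (s := Finset.univ) fun i _ ↦ hfiber i

theorem QuotientAddGroup.bijective_sub_of_bijective_mk {G ι : Type*} [AddCommGroup G]
    {H : AddSubgroup G} {a : ι → G} (ha : Function.Bijective fun i ↦ (a i : G ⧸ H)) :
    Function.Bijective fun p : ι × H ↦ (p.2 : G) - a p.1 := by
  have hmk : ∀ (h : H) i, ((h - a i : G) : G ⧸ H) = -(a i : G ⧸ H) := fun h i ↦ by
    rw [QuotientAddGroup.mk_sub, (QuotientAddGroup.eq_zero_iff _).mpr h.2, zero_sub]
  constructor
  · rintro ⟨i, h⟩ ⟨j, h'⟩ hij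
    have hi : i = j := ha.1 (neg_inj.mp (by rw [← hmk h, ← hmk h']; exact congrArg _ hij))
    subst hi
    simp_all
  · intro g
    obtain ⟨i, hi⟩ := ha.2 (-(g : G ⧸ H))
    have hg : g + a i ∈ H := by
      rw [← QuotientAddGroup.eq_zero_iff, QuotientAddGroup.mk_add, show (a i : G ⧸ H) = _ from hi,
        add_neg_cancel]
    exact ⟨(i, ⟨g + a i, hg⟩), add_sub_cancel_right g (a i)⟩

theorem exists_periodPair_lattice_eq {Λ : AddSubgroup ℂ} (h : IsComplexLattice Λ) :
    ∃ L : PeriodPair, L.lattice.toAddSubgroup = Λ := by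
  obtain ⟨ω₁, ω₂, hli, rfl⟩ := h
  exact ⟨⟨ω₁, ω₂, hli⟩, Submodule.span_int_eq_addSubgroupClosure _⟩

theorem wp_eq_of_hasSum {Λ : AddSubgroup ℂ} {u S : ℂ}
    (h : HasSum (fun w : Λ ↦ 1 / (u - w) ^ 2 - 1 / (w : ℂ) ^ 2) S) : wp Λ u = S := by
  set F : ℂ → ℂ := fun w ↦ 1 / (u - w) ^ 2 - 1 / w ^ 2
  have hnonzero : ∑' ω : {w : ℂ // w ∈ Λ ∧ w ≠ 0}, F ω = ∑' w : Λ, if w = 0 then 0 else F w :=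
    calc ∑' ω : {w : ℂ // w ∈ Λ ∧ w ≠ 0}, F ω
        = ∑' w : {w : Λ // (w : ℂ) ≠ 0}, F w :=
          ((Equiv.subtypeSubtypeEquivSubtypeInter (· ∈ Λ) (· ≠ 0)).tsum_eq fun ω ↦ F ω).symm
      _ = ∑' w : {w : Λ // (w : ℂ) ≠ 0}, if (w : Λ) = 0 then 0 else F w :=
          tsum_congr fun w ↦ (if_neg fun h ↦ w.2 (congrArg Subtype.val h)).symm
      _ = ∑' w : Λ, if w = 0 then 0 else F w :=
          tsum_subtype_eq_of_support_subset (f := fun w : Λ ↦ if w = 0 then 0 else F w)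
            (s := {w | (w : ℂ) ≠ 0}) fun w hw h0 ↦ hw (if_pos (Subtype.ext h0))
  rw [← h.tsum_eq, h.summable.tsum_eq_add_tsum_ite 0]
  exact congr_arg₂ (· + ·) (by simp) hnonzero

theorem wp_lattice_eq_weierstrassP (L : PeriodPair) (u : ℂ) :
    wp L.lattice.toAddSubgroup u = ℘[L] u :=
  wp_eq_of_hasSum (L.hasSum_weierstrassP u)

theorem PeriodPair.hasSum_weierstrassP_add_sub (L : PeriodPair) (u a : ℂ) :
    HasSum (fun ω : L.lattice ↦ 1 / (u - (ω - a)) ^ 2 - 1 / ((ω : ℂ) - a) ^ 2)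
      (℘[L] (u + a) - ℘[L] a) := by
  convert (L.hasSum_weierstrassP (u + a)).sub (L.hasSum_weierstrassP a) using 1
  · rfl
  funext ω
  rw [show ((ω : ℂ) - a) ^ 2 = (a - ω) ^ 2 by ring]
  ring

theorem AddSubgroup.exists_bijective_mk_of_index_eq {G : Type*} [AddGroup G] {H : AddSubgroup G}
    {n : ℕ} (hn : 0 < n) (hidx : H.index = n) :
    ∃ a : Fin n → G, Function.Bijective fun i ↦ (a i : G ⧸ H) := by
  have hcard : Nat.card (G ⧸ H) ≠ 0 := by rw [← AddSubgroup.index, hidx]; exact hn.ne'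
  let b : G ⧸ H ≃ Fin n := (Nat.equivFinOfCardPos hcard).trans (finCongr hidx)
  refine ⟨fun i ↦ (b.symm i).out, ?_⟩
  simpa only [QuotientAddGroup.out_eq'] using b.symm.bijective

theorem PeriodPair.wp_eq_sum_sub_of_bijective_mk (L : PeriodPair) {Λ : AddSubgroup ℂ}
    (hle : L.lattice.toAddSubgroup ≤ Λ) {ι : Type*} [Fintype ι] {a : ι → Λ}
    (ha : Function.Bijective fun i ↦ (a i : Λ ⧸ L.lattice.toAddSubgroup.addSubgroupOf Λ))
    (u : ℂ) : wp Λ u = ∑ i, (℘[L] (u + a i) - ℘[L] (a i)) := by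
  let e : ι × L.lattice.toAddSubgroup ≃ Λ :=
    ((Equiv.refl ι).prodCongr (AddSubgroup.addSubgroupOfEquivOfLe hle).symm.toEquiv).trans
      (Equiv.ofBijective _ (QuotientAddGroup.bijective_sub_of_bijective_mk ha))
  refine wp_eq_of_hasSum (e.hasSum_iff.mp ?_)
  exact hasSum_prod_of_fintype fun i ↦ L.hasSum_weierstrassP_add_sub u (a i)

theorem statement14_general (Λ₁ Λ₂ : AddSubgroup ℂ)
    (h₁ : IsComplexLattice Λ₁) (hle : Λ₁ ≤ Λ₂)
    (n : ℕ) (hn : 0 < n) (hidx : Λ₁.relIndex Λ₂ = n) :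
    ∃ a : Fin n → ℂ, (∀ i, a i ∈ Λ₂) ∧ ∃ C : ℂ,
      ∀ u : ℂ, u ∉ Λ₂ → wp Λ₂ u = (∑ i : Fin n, wp Λ₁ (u + a i)) + C := by
  obtain ⟨L, rfl⟩ := exists_periodPair_lattice_eq h₁
  obtain ⟨a, ha⟩ := AddSubgroup.exists_bijective_mk_of_index_eq hn hidx
  refine ⟨fun i ↦ a i, fun i ↦ (a i).2, -∑ i, ℘[L] (a i), fun u _ ↦ ?_⟩
  rw [L.wp_eq_sum_sub_of_bijective_mk hle ha u, Finset.sum_sub_distrib, sub_eq_add_neg]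
  simp only [wp_lattice_eq_weierstrassP]

/-- Let `Λ₁ ⊆ Λ₂` be lattices of `(ℂ,+)` with finite index `[Λ₂ : Λ₁] = n`.
Then there are `a₁, …, aₙ ∈ Λ₂` and a constant `C ∈ ℂ` with
`℘_{Λ₂}(u) = ∑ᵢ ℘_{Λ₁}(u + aᵢ) + C` for all `u ∈ ℂ \ Λ₂`. -/
theorem statement14 (Λ₁ Λ₂ : AddSubgroup ℂ)
    (h₁ : IsComplexLattice Λ₁) (h₂ : IsComplexLattice Λ₂) (hle : Λ₁ ≤ Λ₂)
    (n : ℕ) (hn : 0 < n) (hidx : Λ₁.relIndex Λ₂ = n) :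
    ∃ a : Fin n → ℂ, (∀ i, a i ∈ Λ₂) ∧ ∃ C : ℂ,
      ∀ u : ℂ, u ∉ Λ₂ → wp Λ₂ u = (∑ i : Fin n, wp Λ₁ (u + a i)) + C :=
  statement14_general Λ₁ Λ₂ h₁ hle n hn hidx
end
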